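/- With the recursive definitions d(n) and r_n as above, the sequence d(n) is nondecreasing: d(n) ≤ d(n+1) for all n ∈ ℕ. -/

import Mathlib

/-!
Every factor of `r_n` lies in `(0, 1]` (positivity because `r / r_{n-1}` is below it), so
`r_n` is nonincreasing and `r / r_{n-1} ≤ r / r_n`. Moreover `k / (k + 1 + 2 ^ e)` decreases
in `e`, so the inequality defining `d(n+1)` implies the one defining `d(n)` at `k = d(n+1)`;
minimality of `d(n)` gives `d(n) ≤ d(n+1)`.
-/

/-- The paper's `r_n` is the product of `stepFactor (d(j)) (d * j - d)` over `1 ≤ j ≤ n`. -/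
noncomputable def stepFactor (k e : ℕ) : ℝ := k / (k + 1 + 2 ^ e)

lemma stepFactor_le_one (k e : ℕ) : stepFactor k e ≤ 1 :=
  div_le_one_of_le₀ (by linarith [pow_pos (two_pos : (0 : ℝ) < 2) e]) (by positivity)

lemma stepFactor_antitone (k : ℕ) : Antitone (stepFactor k) := by
  intro e e' he
  unfold stepFactor
  gcongr
  norm_num

lemma succ_eq_mul_of_eq_prod_Icc {M : Type*} [CommMonoid M] {R g : ℕ → M} (h0 : R 0 = 1)
    (hprod : ∀ n, 1 ≤ n → R n = ∏ j ∈ Finset.Icc 1 n, g j) (n : ℕ) :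
    R (n + 1) = R n * g (n + 1) := by
  have hprod' : ∀ n, R n = ∏ j ∈ Finset.Icc 1 n, g j := by
    rintro (_ | n)
    · simp [h0]
    · exact hprod _ n.succ_pos
  rw [hprod', hprod', Finset.prod_Icc_succ_top n.succ_pos]

lemma pos_of_div_lt_factor {r : ℝ} (hr : 0 < r) {R c : ℕ → ℝ} (h0 : 0 < R 0)
    (hstep : ∀ n, R (n + 1) = R n * c n) (hc : ∀ n, r / R n < c n) (n : ℕ) : 0 < R n := by
  induction n with
  | zero => exact h0
  | succ n ih => rw [hstep]; exact mul_pos ih ((div_pos hr ih).trans (hc n))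

theorem d_seq_monotone_general (r : ℝ) (hr0 : 0 < r) (d : ℕ)
    (D : ℕ → ℕ) (R : ℕ → ℝ) (hR0 : R 0 = 1)
    (hRprod : ∀ n, 1 ≤ n →
      R n = ∏ j ∈ Finset.Icc 1 n, (D j : ℝ) / ((D j : ℝ) + 1 + 2 ^ (d * j - d)))
    (hleast : ∀ n, 1 ≤ n →
      IsLeast {k : ℕ | r / R (n - 1) < (k : ℝ) / ((k : ℝ) + 1 + 2 ^ (d * n - d))} (D n)) :
    ∀ n, 1 ≤ n → D n ≤ D (n + 1) := by
  have hstep (n : ℕ) : R (n + 1) = R n * stepFactor (D (n + 1)) (d * (n + 1) - d) :=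
    succ_eq_mul_of_eq_prod_Icc hR0 hRprod n
  have hmem (n : ℕ) : r / R n < stepFactor (D (n + 1)) (d * (n + 1) - d) :=
    (hleast (n + 1) n.succ_pos).1
  have hpos := pos_of_div_lt_factor hr0 (hR0 ▸ one_pos) hstep hmem
  have hanti : Antitone R := antitone_nat_of_succ_le fun n => by
    rw [hstep]
    exact mul_le_of_le_one_right (hpos n).le (stepFactor_le_one _ _)
  intro n hn
  apply (hleast n hn).2
  calc r / R (n - 1)
      ≤ r / R n := div_le_div_of_nonneg_left hr0.le (hpos n) (hanti (Nat.sub_le n 1))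
    _ < stepFactor (D (n + 1)) (d * (n + 1) - d) := hmem n
    _ ≤ stepFactor (D (n + 1)) (d * n - d) :=
      stepFactor_antitone _ (Nat.sub_le_sub_right (Nat.mul_le_mul_left d n.le_succ) d)

/-- with the recursive definitions `d(n)` and `r_n` as in the paper's
Lemma 2.4, the sequence `d(n)` is nondecreasing: `d(n) ≤ d(n+1)` for all `n ≥ 1`. -/
theorem d_seq_monotone (r : ℝ) (hr0 : 0 < r) (hr1 : r < 1) (d : ℕ) (hd : 1 ≤ d)
    (D : ℕ → ℕ) (R : ℕ → ℝ) (hR0 : R 0 = 1)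
    (hRprod : ∀ n, 1 ≤ n →
      R n = ∏ j ∈ Finset.Icc 1 n, (D j : ℝ) / ((D j : ℝ) + 1 + 2 ^ (d * j - d)))
    (hleast : ∀ n, 1 ≤ n →
      IsLeast {k : ℕ | r / R (n - 1) < (k : ℝ) / ((k : ℝ) + 1 + 2 ^ (d * n - d))} (D n)) :
    ∀ n, 1 ≤ n → D n ≤ D (n + 1) :=
  d_seq_monotone_general r hr0 d D R hR0 hRprod hleast
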